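/- Fix integers 1 ≤ i ≤ n−1 and R > 0, and let D^n_{i,R} be the set of ζ ∈ D^n_i with support contained in (0,R]. Then D^n_{i,R} is a Banach space (i.e., complete) with respect to the norm ‖ζ‖ := sup_{t>0} |(n−i)∫_t^∞ ζ(s)s^{n−i−1}ds| + sup_{t>0} |t^{n−i}ζ(t) + (n−i)∫_t^∞ ζ(s)s^{n−i−1}ds|. -/

import Mathlib

open MeasureTheory Filter

/-- The class `D^n_i`. -/
def Dni (n i : ℕ) (ζ : ℝ → ℝ) : Prop :=
  ContinuousOn ζ (Set.Ioi 0) ∧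
  (∃ R : ℝ, ∀ t > R, ζ t = 0) ∧
  Tendsto (fun t : ℝ => t ^ (n - i) * ζ t) (nhdsWithin 0 (Set.Ioi 0)) (nhds 0) ∧
  ∃ L : ℝ, Tendsto (fun t : ℝ => ∫ s in Set.Ioi t, ζ s * s ^ (n - i - 1))
    (nhdsWithin 0 (Set.Ioi 0)) (nhds L)

/-- `D^n_{i,R}`: elements of `D^n_i` supported in `(0,R]`. -/
def DniR (n i : ℕ) (R : ℝ) (ζ : ℝ → ℝ) : Prop :=
  Dni n i ζ ∧ ∀ t > R, ζ t = 0

/-- The norm `‖ζ‖` on `D^n_i`. -/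
noncomputable def dnorm (n i : ℕ) (ζ : ℝ → ℝ) : ℝ :=
  (⨆ t : Set.Ioi (0:ℝ), |(n - i : ℝ) * ∫ s in Set.Ioi (t:ℝ), ζ s * s ^ (n - i - 1)|) +
  (⨆ t : Set.Ioi (0:ℝ),
    |(t:ℝ) ^ (n - i) * ζ t + (n - i : ℝ) * ∫ s in Set.Ioi (t:ℝ), ζ s * s ^ (n - i - 1)|)

/-!
With `m = n - i` and `K ζ t = ∫_t^∞ ζ(s) s^(m-1) ds`, the two suprema in the norm bound `m K ζ(t)`
and `t^m ζ(t) + m K ζ(t)` uniformly in `t > 0`, hence also `t^m ζ(t)` (by `2‖ζ‖`). For a Cauchy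
sequence `ζ_j`, therefore, `t^m ζ_j(t)` and `K ζ_j(t)` converge uniformly on `(0, ∞)` and `ζ_j`
converges uniformly on every `[a, ∞)`, `a > 0`. The pointwise limit `g` is continuous and supported
in `(0, R]`; `K ζ_j(t) → K g(t)` by uniform convergence of the integrands on `[t, R]`, and the limits
at `0⁺` required of `g` exist by the Moore–Osgood theorem. Finally, the norm is lower
semicontinuous under this pointwise convergence: each supremum in `‖ζ_j - g‖` is at most
`lim sup_l ‖ζ_j - ζ_l‖`.
-/

open Set Topology

theorem uniformCauchySeqOn_of_abs_sub_le {α : Type*} {u : ℕ → α → ℝ} {s : Set α}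
    {d : ℕ → ℕ → ℝ} (hd : ∀ ε > (0:ℝ), ∃ N : ℕ, ∀ j l, N ≤ j → N ≤ l → d j l < ε)
    {C : ℝ} (hC : 0 < C) (hu : ∀ j l, ∀ x ∈ s, |u j x - u l x| ≤ C * d j l) :
    UniformCauchySeqOn u atTop s := by
  refine Metric.uniformCauchySeqOn_iff.2 fun ε hε => ?_
  obtain ⟨N, hN⟩ := hd (ε / C) (by positivity)
  refine ⟨N, fun j hj l hl x hx => ?_⟩
  calc dist (u j x) (u l x) ≤ C * d j l := hu j l x hx
    _ < C * (ε / C) := by gcongr; exact hN j l hj hl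
    _ = ε := by field_simp

theorem TendstoUniformlyOnFilter.exists_tendsto {α β : Type*} [PseudoMetricSpace β]
    [CompleteSpace β] {F : ℕ → α → β} {f : α → β} {p : Filter α} [p.NeBot] {L : ℕ → β}
    (h : TendstoUniformlyOnFilter F f atTop p) (hL : ∀ j, Tendsto (F j) p (𝓝 (L j))) :
    ∃ ℓ, Tendsto f p (𝓝 ℓ) := by
  have hL_cauchy : CauchySeq L := by
    refine Metric.cauchySeq_iff'.2 fun ε hε => ?_
    obtain ⟨N, hN⟩ := eventually_atTop.1
      (Metric.tendstoUniformlyOnFilter_iff.1 h (ε / 3) (by positivity)).curry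
    refine ⟨N, fun j hj => lt_of_le_of_lt (b := 2 * (ε / 3)) ?_ (by linarith)⟩
    refine le_of_tendsto ((hL j).dist (hL N)) ?_
    filter_upwards [hN j hj, hN N le_rfl] with x hjx hNx
    linarith [dist_triangle_left (F j x) (F N x) (f x)]
  obtain ⟨ℓ, hℓ⟩ := cauchySeq_tendsto_of_complete hL_cauchy
  exact ⟨ℓ, h.tendsto_of_eventually_tendsto (.of_forall hL) hℓ⟩

theorem bddAbove_abs_of_tendsto_nhdsGT {F : ℝ → ℝ} {l : ℝ} (hF : Tendsto F (𝓝[>] 0) (𝓝 l))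
    (hbdd : ∀ δ > 0, ∃ C, ∀ t ≥ δ, |F t| ≤ C) :
    BddAbove (range fun t : Ioi (0:ℝ) => |F t|) := by
  obtain ⟨δ, hδ, hnear⟩ := mem_nhdsGT_iff_exists_Ioo_subset.1
    (hF.abs.eventually (gt_mem_nhds (lt_add_one |l|)))
  obtain ⟨C, hC⟩ := hbdd δ hδ
  refine ⟨max (|l| + 1) C, forall_mem_range.2 fun t => ?_⟩
  rcases lt_or_ge (t : ℝ) δ with h | h
  · exact le_max_of_le_left (hnear ⟨t.2, h⟩).le
  · exact le_max_of_le_right (hC t h)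

theorem abs_mul_pow_mul_pow_sub_le {a x : ℝ} (ha : 0 < a) (hax : a ≤ x) (y : ℝ) {k m : ℕ}
    (hkm : k ≤ m) : |y * x ^ k| * a ^ (m - k) ≤ |x ^ m * y| := by
  have hx : 0 ≤ x := ha.le.trans hax
  calc |y * x ^ k| * a ^ (m - k) ≤ |y * x ^ k| * x ^ (m - k) := by gcongr
    _ = |x ^ m * y| := by
      rw [abs_mul, abs_mul, abs_of_nonneg (pow_nonneg hx _), abs_of_nonneg (pow_nonneg hx _),
        ← Nat.add_sub_of_le hkm, pow_add, Nat.add_sub_cancel_left]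
      ring

/-- The integrals in `Dni` and `dnorm` are `weightedTail (n - i - 1)`. -/
noncomputable def weightedTail (k : ℕ) (f : ℝ → ℝ) (t : ℝ) : ℝ :=
  ∫ s in Ioi t, f s * s ^ k

section WeightedTail

variable {k : ℕ} {R t : ℝ} {f g : ℝ → ℝ}

theorem integrableOn_mul_pow_Ioi (hf : ContinuousOn f (Ioi 0)) (hfR : ∀ s > R, f s = 0)
    (ht : 0 < t) : IntegrableOn (fun s => f s * s ^ k) (Ioi t) := by
  rw [← Ioc_union_Ioi_eq_Ioi (le_max_right R t)]
  refine IntegrableOn.union ?_ ?_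
  · refine ((hf.mono fun x hx => ht.trans_le hx.1).mul (continuous_pow k).continuousOn
      |>.integrableOn_compact isCompact_Icc).mono_set Ioc_subset_Icc_self
  · refine (integrableOn_congr_fun (fun s hs => ?_) measurableSet_Ioi).2 integrableOn_zero
    rw [hfR s ((le_max_left R t).trans_lt hs), zero_mul]

theorem weightedTail_sub (hf : ContinuousOn f (Ioi 0)) (hfR : ∀ s > R, f s = 0)
    (hg : ContinuousOn g (Ioi 0)) (hgR : ∀ s > R, g s = 0) (ht : 0 < t) :
    weightedTail k (fun s => f s - g s) t = weightedTail k f t - weightedTail k g t := by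
  simp only [weightedTail, sub_mul]
  exact integral_sub (integrableOn_mul_pow_Ioi hf hfR ht) (integrableOn_mul_pow_Ioi hg hgR ht)

theorem weightedTail_eq_intervalIntegral (hfR : ∀ s > R, f s = 0) :
    weightedTail k f t = ∫ s in t..max R t, f s * s ^ k := by
  rw [intervalIntegral.integral_of_le (le_max_right R t), weightedTail,
    setIntegral_eq_of_subset_of_forall_sdiff_eq_zero measurableSet_Ioi Ioc_subset_Ioi_self]
  intro s ⟨hst, hs⟩
  have : max R t < s := by by_contra h; exact hs ⟨hst, not_lt.1 h⟩
  rw [hfR s ((le_max_left R t).trans_lt this), zero_mul]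

theorem abs_weightedTail_le (hf : ContinuousOn f (Ioi 0)) (hfR : ∀ s > R, f s = 0)
    {δ : ℝ} (hδ : 0 < δ) (hδt : δ ≤ t) :
    |weightedTail k f t| ≤ ∫ s in Ioi δ, |f s * s ^ k| :=
  calc |weightedTail k f t| ≤ ∫ s in Ioi t, |f s * s ^ k| :=
        abs_integral_le_integral_abs
    _ ≤ ∫ s in Ioi δ, |f s * s ^ k| :=
        setIntegral_mono_set (integrableOn_mul_pow_Ioi hf hfR hδ).abs
          (.of_forall fun _ => abs_nonneg _) (Ioi_subset_Ioi hδt).eventuallyLE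

theorem TendstoUniformlyOn.tendsto_weightedTail {ι : Type*} {l : Filter ι}
    [l.IsCountablyGenerated] {F : ι → ℝ → ℝ} (hF : ∀ j, ContinuousOn (F j) (Ioi 0))
    (hFR : ∀ j, ∀ s > R, F j s = 0) (hfR : ∀ s > R, f s = 0) (ht : 0 < t)
    (h : TendstoUniformlyOn (fun j s => F j s * s ^ k) (fun s => f s * s ^ k) l (Ici t)) :
    Tendsto (fun j => weightedTail k (F j) t) l (𝓝 (weightedTail k f t)) := by
  simp only [weightedTail_eq_intervalIntegral (hFR _), weightedTail_eq_intervalIntegral hfR]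
  have hsub : uIcc t (max R t) ⊆ Ici t := by
    rw [uIcc_of_le (le_max_right R t)]; exact Icc_subset_Ici_self
  refine (h.mono hsub).tendsto_intervalIntegral_of_continuousOn (.of_forall fun j => ?_)
  exact ((hF j).mono fun x hx => ht.trans_le (hsub hx)).mul (continuous_pow k).continuousOn

end WeightedTail

section Dni

variable {n i : ℕ} {f g : ℝ → ℝ} {t : ℝ}

theorem dnorm_def (n i : ℕ) (f : ℝ → ℝ) : dnorm n i f =
    (⨆ t : Ioi (0:ℝ), |(n - i : ℝ) * weightedTail (n - i - 1) f t|) +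
    (⨆ t : Ioi (0:ℝ), |(t:ℝ) ^ (n - i) * f t + (n - i : ℝ) * weightedTail (n - i - 1) f t|) :=
  rfl

theorem dnorm_nonneg (n i : ℕ) (f : ℝ → ℝ) : 0 ≤ dnorm n i f :=
  add_nonneg (Real.iSup_nonneg fun _ => abs_nonneg _) (Real.iSup_nonneg fun _ => abs_nonneg _)

theorem Dni.sub (hf : Dni n i f) (hg : Dni n i g) : Dni n i (fun t => f t - g t) := by
  obtain ⟨hfc, ⟨Rf, hfR⟩, hfp, Lf, hfL⟩ := hf
  obtain ⟨hgc, ⟨Rg, hgR⟩, hgp, Lg, hgL⟩ := hg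
  have hfR' : ∀ t > max Rf Rg, f t = 0 := fun t ht => hfR t ((le_max_left _ _).trans_lt ht)
  have hgR' : ∀ t > max Rf Rg, g t = 0 := fun t ht => hgR t ((le_max_right _ _).trans_lt ht)
  refine ⟨hfc.sub hgc, ⟨max Rf Rg, fun t ht => by simp only [hfR' t ht, hgR' t ht, sub_self]⟩,
    ?_, Lf - Lg, ?_⟩
  · simpa only [mul_sub, sub_zero] using hfp.sub hgp
  · refine (hfL.sub hgL).congr' ?_
    filter_upwards [self_mem_nhdsWithin] with t ht
    exact (weightedTail_sub hfc hfR' hgc hgR' ht).symm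

theorem exists_abs_pow_mul_le {R : ℝ} (hf : ContinuousOn f (Ioi 0)) (hfR : ∀ s > R, f s = 0)
    (k : ℕ) {δ : ℝ} (hδ : 0 < δ) : ∃ C, ∀ t ≥ δ, |t ^ k * f t| ≤ C := by
  obtain ⟨C, hC⟩ := (isCompact_Icc (a := δ) (b := R)).exists_bound_of_continuousOn
    ((continuous_pow k).continuousOn.mul (hf.mono fun x hx => hδ.trans_le hx.1))
  refine ⟨max C 0, fun t ht => ?_⟩
  rcases le_or_gt t R with h | h
  · exact le_max_of_le_left (hC t ⟨ht, h⟩)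
  · rw [hfR t h, mul_zero, abs_zero]
    exact le_max_right _ _

theorem Dni.bddAbove_tail (hf : Dni n i f) :
    BddAbove (range fun t : Ioi (0:ℝ) => |(n - i : ℝ) * weightedTail (n - i - 1) f t|) := by
  obtain ⟨hc, ⟨R, hR⟩, -, L, hL⟩ := hf
  refine bddAbove_abs_of_tendsto_nhdsGT (hL.const_mul (n - i : ℝ)) fun δ hδ =>
    ⟨|(n - i : ℝ)| * ∫ s in Ioi δ, |f s * s ^ (n - i - 1)|, fun t ht => ?_⟩
  rw [abs_mul]
  exact mul_le_mul_of_nonneg_left (abs_weightedTail_le hc hR hδ ht) (abs_nonneg _)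

theorem Dni.bddAbove_pow_mul_add_tail (hf : Dni n i f) :
    BddAbove (range fun t : Ioi (0:ℝ) =>
      |(t:ℝ) ^ (n - i) * f t + (n - i : ℝ) * weightedTail (n - i - 1) f t|) := by
  obtain ⟨hc, ⟨R, hR⟩, hp, L, hL⟩ := hf
  refine bddAbove_abs_of_tendsto_nhdsGT (hp.add (hL.const_mul (n - i : ℝ))) fun δ hδ => ?_
  obtain ⟨C, hC⟩ := exists_abs_pow_mul_le hc hR (n - i) hδ
  refine ⟨C + |(n - i : ℝ)| * ∫ s in Ioi δ, |f s * s ^ (n - i - 1)|, fun t ht => ?_⟩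
  refine (abs_add_le _ _).trans (add_le_add (hC t ht) ?_)
  rw [abs_mul]
  exact mul_le_mul_of_nonneg_left (abs_weightedTail_le hc hR hδ ht) (abs_nonneg _)

theorem Dni.abs_tail_le_dnorm (hf : Dni n i f) (ht : 0 < t) :
    |(n - i : ℝ) * weightedTail (n - i - 1) f t| ≤ dnorm n i f :=
  le_add_of_le_of_nonneg (le_ciSup hf.bddAbove_tail (⟨t, ht⟩ : Ioi (0:ℝ)))
    (Real.iSup_nonneg fun _ => abs_nonneg _)

theorem Dni.abs_pow_mul_add_tail_le_dnorm (hf : Dni n i f) (ht : 0 < t) :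
    |t ^ (n - i) * f t + (n - i : ℝ) * weightedTail (n - i - 1) f t| ≤ dnorm n i f :=
  le_add_of_nonneg_of_le (Real.iSup_nonneg fun _ => abs_nonneg _)
    (le_ciSup hf.bddAbove_pow_mul_add_tail (⟨t, ht⟩ : Ioi (0:ℝ)))

theorem Dni.abs_pow_mul_le_dnorm (hf : Dni n i f) (ht : 0 < t) :
    |t ^ (n - i) * f t| ≤ 2 * dnorm n i f := by
  have h := abs_sub (t ^ (n - i) * f t + (n - i : ℝ) * weightedTail (n - i - 1) f t)
    ((n - i : ℝ) * weightedTail (n - i - 1) f t)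
  rw [add_sub_cancel_right] at h
  linarith [hf.abs_tail_le_dnorm ht, hf.abs_pow_mul_add_tail_le_dnorm ht]

theorem dnorm_le_of_tendsto {h : ℕ → ℝ → ℝ} (hh : ∀ l, Dni n i (h l))
    (hpt : ∀ t > 0, Tendsto (fun l => h l t) atTop (𝓝 (f t)))
    (htail : ∀ t > 0, Tendsto (fun l => weightedTail (n - i - 1) (h l) t) atTop
      (𝓝 (weightedTail (n - i - 1) f t)))
    {c : ℝ} (hc : ∀ᶠ l in atTop, dnorm n i (h l) ≤ c) : dnorm n i f ≤ c + c := by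
  rw [dnorm_def]
  refine add_le_add (ciSup_le fun t => ?_) (ciSup_le fun t => ?_)
  · refine le_of_tendsto ((htail t t.2).const_mul (n - i : ℝ)).abs ?_
    exact hc.mono fun l hl => ((hh l).abs_tail_le_dnorm t.2).trans hl
  · refine le_of_tendsto (((hpt t t.2).const_mul _).add ((htail t t.2).const_mul _)).abs ?_
    exact hc.mono fun l hl => ((hh l).abs_pow_mul_add_tail_le_dnorm t.2).trans hl

end Dni

def DnormCauchySeq (n i : ℕ) (ζ : ℕ → ℝ → ℝ) : Prop :=
  ∀ ε > (0:ℝ), ∃ N : ℕ, ∀ j l, N ≤ j → N ≤ l → dnorm n i (fun t => ζ j t - ζ l t) < ε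

noncomputable def seqLim (ζ : ℕ → ℝ → ℝ) (t : ℝ) : ℝ :=
  limUnder atTop fun j => ζ j t

section DnormCauchySeq

variable {n i : ℕ} {R : ℝ} {ζ : ℕ → ℝ → ℝ}

theorem uniformCauchySeqOn_pow_mul (hmem : ∀ j, Dni n i (ζ j)) (hζ : DnormCauchySeq n i ζ) :
    UniformCauchySeqOn (fun j x => x ^ (n - i) * ζ j x) atTop (Ioi 0) :=
  uniformCauchySeqOn_of_abs_sub_le hζ two_pos fun j l _ hx => by
    simpa only [mul_sub] using ((hmem j).sub (hmem l)).abs_pow_mul_le_dnorm hx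

theorem uniformCauchySeqOn_mul_pow (hmem : ∀ j, Dni n i (ζ j)) (hζ : DnormCauchySeq n i ζ)
    {k : ℕ} (hk : k ≤ n - i) {a : ℝ} (ha : 0 < a) :
    UniformCauchySeqOn (fun j x => ζ j x * x ^ k) atTop (Ici a) := by
  refine uniformCauchySeqOn_of_abs_sub_le hζ (C := 2 / a ^ (n - i - k)) (by positivity)
    fun j l x hx => ?_
  rw [← sub_mul, div_mul_eq_mul_div, le_div_iff₀ (by positivity)]
  exact (abs_mul_pow_mul_pow_sub_le ha hx _ hk).trans
    (((hmem j).sub (hmem l)).abs_pow_mul_le_dnorm (ha.trans_le hx))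

theorem uniformCauchySeqOn_tail (hni : i < n) (hmem : ∀ j, DniR n i R (ζ j))
    (hζ : DnormCauchySeq n i ζ) :
    UniformCauchySeqOn (fun j => weightedTail (n - i - 1) (ζ j)) atTop (Ioi 0) := by
  have hm : (0:ℝ) < n - i := sub_pos.2 (Nat.cast_lt.2 hni)
  refine uniformCauchySeqOn_of_abs_sub_le hζ (C := 1 / (n - i : ℝ)) (by positivity)
    fun j l _ hx => ?_
  have h := ((hmem j).1.sub (hmem l).1).abs_tail_le_dnorm hx
  rw [weightedTail_sub (hmem j).1.1 (hmem j).2 (hmem l).1.1 (hmem l).2 hx, abs_mul,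
    abs_of_pos hm] at h
  rw [one_div_mul_eq_div, le_div_iff₀ hm]
  linarith

theorem tendsto_seqLim (hmem : ∀ j, Dni n i (ζ j)) (hζ : DnormCauchySeq n i ζ) {t : ℝ}
    (ht : 0 < t) : Tendsto (fun j => ζ j t) atTop (𝓝 (seqLim ζ t)) := by
  have h := (uniformCauchySeqOn_mul_pow hmem hζ (Nat.zero_le _) ht).cauchySeq self_mem_Ici
  simp only [pow_zero, mul_one] at h
  exact h.tendsto_limUnder

theorem seqLim_eq_zero (hζR : ∀ j, ∀ t > R, ζ j t = 0) {t : ℝ} (ht : R < t) :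
    seqLim ζ t = 0 := by
  simp only [seqLim, hζR _ t ht]
  exact tendsto_const_nhds.limUnder_eq

theorem tendstoUniformlyOn_mul_pow_seqLim (hmem : ∀ j, Dni n i (ζ j))
    (hζ : DnormCauchySeq n i ζ) {k : ℕ} (hk : k ≤ n - i) {a : ℝ} (ha : 0 < a) :
    TendstoUniformlyOn (fun j x => ζ j x * x ^ k) (fun x => seqLim ζ x * x ^ k) atTop (Ici a) :=
  (uniformCauchySeqOn_mul_pow hmem hζ hk ha).tendstoUniformlyOn_of_tendsto fun _ hx =>
    (tendsto_seqLim hmem hζ (ha.trans_le hx)).mul_const _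

theorem continuousOn_seqLim (hmem : ∀ j, Dni n i (ζ j)) (hζ : DnormCauchySeq n i ζ) :
    ContinuousOn (seqLim ζ) (Ioi 0) := by
  intro t ht
  have ha : 0 < t / 2 := half_pos ht
  have hU := tendstoUniformlyOn_mul_pow_seqLim hmem hζ (Nat.zero_le _) ha
  simp only [pow_zero, mul_one] at hU
  have hc := hU.continuousOn
    (Eventually.of_forall fun j => (hmem j).1.mono fun x hx => ha.trans_le hx).frequently
  exact (hc.continuousAt (Ici_mem_nhds (half_lt_self ht))).continuousWithinAt

theorem tendsto_pow_mul_seqLim (hmem : ∀ j, Dni n i (ζ j)) (hζ : DnormCauchySeq n i ζ) :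
    Tendsto (fun t => t ^ (n - i) * seqLim ζ t) (𝓝[>] 0) (𝓝 0) := by
  have hU := (uniformCauchySeqOn_pow_mul hmem hζ).tendstoUniformlyOn_of_tendsto fun t ht =>
    (tendsto_seqLim hmem hζ ht).const_mul (t ^ (n - i))
  exact (hU.tendstoUniformlyOnFilter.mono_right (p'' := 𝓝[>] 0) inf_le_right
    ).tendsto_of_eventually_tendsto (.of_forall fun j => (hmem j).2.2.1) tendsto_const_nhds

theorem tendsto_tail_seqLim (hmem : ∀ j, DniR n i R (ζ j)) (hζ : DnormCauchySeq n i ζ)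
    {t : ℝ} (ht : 0 < t) :
    Tendsto (fun j => weightedTail (n - i - 1) (ζ j) t) atTop
      (𝓝 (weightedTail (n - i - 1) (seqLim ζ) t)) :=
  (tendstoUniformlyOn_mul_pow_seqLim (fun j => (hmem j).1) hζ (Nat.sub_le _ _) ht
    ).tendsto_weightedTail (fun j => (hmem j).1.1) (fun j => (hmem j).2)
    (fun _ hs => seqLim_eq_zero (fun j => (hmem j).2) hs) ht

theorem exists_tendsto_tail_seqLim (hni : i < n) (hmem : ∀ j, DniR n i R (ζ j))
    (hζ : DnormCauchySeq n i ζ) :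
    ∃ L, Tendsto (weightedTail (n - i - 1) (seqLim ζ)) (𝓝[>] 0) (𝓝 L) := by
  choose L hL using fun j => (hmem j).1.2.2.2
  have hU := (uniformCauchySeqOn_tail hni hmem hζ).tendstoUniformlyOn_of_tendsto fun t ht =>
    tendsto_tail_seqLim hmem hζ ht
  exact (hU.tendstoUniformlyOnFilter.mono_right (p'' := 𝓝[>] 0) inf_le_right).exists_tendsto hL

theorem dniR_seqLim (hni : i < n) (hmem : ∀ j, DniR n i R (ζ j))
    (hζ : DnormCauchySeq n i ζ) : DniR n i R (seqLim ζ) :=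
  have hR : ∀ t > R, seqLim ζ t = 0 := fun _ ht => seqLim_eq_zero (fun j => (hmem j).2) ht
  ⟨⟨continuousOn_seqLim (fun j => (hmem j).1) hζ, ⟨R, hR⟩,
    tendsto_pow_mul_seqLim (fun j => (hmem j).1) hζ, exists_tendsto_tail_seqLim hni hmem hζ⟩, hR⟩

theorem tendsto_dnorm_sub_seqLim (hni : i < n) (hmem : ∀ j, DniR n i R (ζ j))
    (hζ : DnormCauchySeq n i ζ) :
    Tendsto (fun j => dnorm n i (fun t => ζ j t - seqLim ζ t)) atTop (𝓝 0) := by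
  have hg := dniR_seqLim hni hmem hζ
  refine Metric.tendsto_atTop.2 fun ε hε => ?_
  obtain ⟨N, hN⟩ := hζ (ε / 3) (by positivity)
  refine ⟨N, fun j hj => ?_⟩
  have hle : dnorm n i (fun t => ζ j t - seqLim ζ t) ≤ ε / 3 + ε / 3 := by
    refine dnorm_le_of_tendsto (fun l => (hmem j).1.sub (hmem l).1)
      (fun t ht => tendsto_const_nhds.sub (tendsto_seqLim (fun l => (hmem l).1) hζ ht))
      (fun t ht => ?_) ((eventually_ge_atTop N).mono fun l hl => (hN j l hj hl).le)
    rw [weightedTail_sub (hmem j).1.1 (hmem j).2 hg.1.1 hg.2 ht]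
    refine (tendsto_const_nhds.sub (tendsto_tail_seqLim hmem hζ ht)).congr fun l => ?_
    exact (weightedTail_sub (hmem j).1.1 (hmem j).2 (hmem l).1.1 (hmem l).2 ht).symm
  rw [Real.dist_eq, sub_zero, abs_of_nonneg (dnorm_nonneg ..)]
  linarith

end DnormCauchySeq

theorem stmt4_general (n i : ℕ) (h1 : 1 ≤ i) (h2 : i ≤ n - 1) (R : ℝ)
    (ζ : ℕ → ℝ → ℝ) (hmem : ∀ j, DniR n i R (ζ j))
    (hcauchy : ∀ ε > (0:ℝ), ∃ N : ℕ, ∀ j l, N ≤ j → N ≤ l →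
      dnorm n i (fun t => ζ j t - ζ l t) < ε) :
    ∃ g : ℝ → ℝ, DniR n i R g ∧
      Tendsto (fun j => dnorm n i (fun t => ζ j t - g t)) atTop (nhds 0) := by
  have hni : i < n := by omega
  exact ⟨seqLim ζ, dniR_seqLim hni hmem hcauchy, tendsto_dnorm_sub_seqLim hni hmem hcauchy⟩

/-- `D^n_{i,R}` is complete with respect to the norm `‖·‖`. -/
theorem stmt4 (n i : ℕ) (h1 : 1 ≤ i) (h2 : i ≤ n - 1) (R : ℝ) (hR : 0 < R)
    (ζ : ℕ → ℝ → ℝ) (hmem : ∀ j, DniR n i R (ζ j))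
    (hcauchy : ∀ ε > (0:ℝ), ∃ N : ℕ, ∀ j l, N ≤ j → N ≤ l →
      dnorm n i (fun t => ζ j t - ζ l t) < ε) :
    ∃ g : ℝ → ℝ, DniR n i R g ∧
      Tendsto (fun j => dnorm n i (fun t => ζ j t - g t)) atTop (nhds 0) :=
  stmt4_general n i h1 h2 R ζ hmem hcauchy
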